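/- There exists an optimal ordering a such that: every position x lying in a block other than the final block satisfies p_{a(x)} ≠ 1/2; and for all positions x < y that both lie in blocks other than the final block, if p_{a(x)} > 1/2 and p_{a(y)} > 1/2 then p_{a(x)} ≥ p_{a(y)}, while if p_{a(x)} < 1/2 and p_{a(y)} < 1/2 then p_{a(x)} ≤ p_{a(y)}. (The coins in non-final blocks split into a set with heads-probability > 1/2, appearing in non-increasing order, and a set with heads-probability < 1/2, appearing in non-decreasing order.) -/
import Mathlib


open Finset

/-- `z1 p a j = ∏_{i=1}^{j-1} p_{a(i)}`: the probability that the first `j-1`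
coins in ordering `a` all come up heads. -/
noncomputable def z1 (p : ℕ → ℝ) (a : ℕ → ℕ) (j : ℕ) : ℝ :=
  ∏ i ∈ Finset.Ico 1 j, p (a i)

/-- `z0 p a j = ∏_{i=1}^{j-1} (1 - p_{a(i)})`: the probability that the first `j-1`
coins in ordering `a` all come up tails. -/
noncomputable def z0 (p : ℕ → ℝ) (a : ℕ → ℕ) (j : ℕ) : ℝ :=
  ∏ i ∈ Finset.Ico 1 j, (1 - p (a i))

/-- `cost n p a = 2 + Σ_{j=3}^{n} (z_j^1(a) + z_j^0(a))`. -/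
noncomputable def cost (n : ℕ) (p : ℕ → ℝ) (a : ℕ → ℕ) : ℝ :=
  2 + ∑ j ∈ Finset.Icc 3 n, (z1 p a j + z0 p a j)

/-- An ordering is a permutation of the positions `{1, …, n}`. -/
def IsOrdering (n : ℕ) (a : ℕ → ℕ) : Prop :=
  Set.BijOn a (Set.Icc 1 n) (Set.Icc 1 n)

/-- An ordering is optimal if it has minimal cost among all orderings. -/
def IsOptimal (n : ℕ) (p : ℕ → ℝ) (a : ℕ → ℕ) : Prop :=
  IsOrdering n a ∧ ∀ b : ℕ → ℕ, IsOrdering n b → cost n p a ≤ cost n p b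

/-- `a` is 0-biased at position `j`: `z_j^0(a) > z_j^1(a)`. -/
def ZeroBiased (p : ℕ → ℝ) (a : ℕ → ℕ) (j : ℕ) : Prop := z1 p a j < z0 p a j

/-- `a` is 1-biased at position `j`: `z_j^0(a) < z_j^1(a)`. -/
def OneBiased (p : ℕ → ℝ) (a : ℕ → ℕ) (j : ℕ) : Prop := z0 p a j < z1 p a j

/-- `a` is unbiased at position `j`: `z_j^0(a) = z_j^1(a)`. -/
def Unbiased (p : ℕ → ℝ) (a : ℕ → ℕ) (j : ℕ) : Prop := z0 p a j = z1 p a j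

/-- The bias type of ordering `a` at position `j`, as an `Ordering`:
`.gt` means 0-biased, `.lt` means 1-biased and `.eq` means unbiased. -/
noncomputable def btype (p : ℕ → ℝ) (a : ℕ → ℕ) (j : ℕ) : Ordering :=
  compare (z0 p a j) (z1 p a j)

/-- Position `x` lies in the final block of the ordering `a`, i.e. in the
maximal run of constant bias type ending at position `n`. -/
def InFinalBlock (n : ℕ) (p : ℕ → ℝ) (a : ℕ → ℕ) (x : ℕ) : Prop :=
  1 ≤ x ∧ x ≤ n ∧ ∀ y, x ≤ y → y ≤ n → btype p a y = btype p a n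

section Basics

variable {n : ℕ} {p : ℕ → ℝ} {a : ℕ → ℕ}

lemma hpmem (hOrd : IsOrdering n a) (hp : ∀ i, 1 ≤ i → i ≤ n → 0 ≤ p i ∧ p i ≤ 1)
    {i : ℕ} (h1 : 1 ≤ i) (h2 : i ≤ n) : 0 ≤ p (a i) ∧ p (a i) ≤ 1 := by
  have := hOrd.mapsTo (show i ∈ Set.Icc 1 n from ⟨h1, h2⟩)
  exact hp (a i) this.1 this.2

lemma z1_nonneg (hOrd : IsOrdering n a) (hp : ∀ i, 1 ≤ i → i ≤ n → 0 ≤ p i ∧ p i ≤ 1)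
    {j : ℕ} (hj : j ≤ n) : 0 ≤ z1 p a j := by
  apply Finset.prod_nonneg
  intro i hi
  simp only [Finset.mem_Ico] at hi
  exact (hpmem hOrd hp hi.1 (by omega)).1

lemma z0_nonneg (hOrd : IsOrdering n a) (hp : ∀ i, 1 ≤ i → i ≤ n → 0 ≤ p i ∧ p i ≤ 1)
    {j : ℕ} (hj : j ≤ n) : 0 ≤ z0 p a j := by
  apply Finset.prod_nonneg
  intro i hi
  simp only [Finset.mem_Ico] at hi
  have := (hpmem hOrd hp hi.1 (by omega)).2
  linarith

lemma z1_succ {j : ℕ} (hj : 1 ≤ j) : z1 p a (j + 1) = z1 p a j * p (a j) :=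
  Finset.prod_Ico_succ_top hj _

lemma z0_succ {j : ℕ} (hj : 1 ≤ j) : z0 p a (j + 1) = z0 p a j * (1 - p (a j)) :=
  Finset.prod_Ico_succ_top hj _

lemma z1_one : z1 p a 1 = 1 := by simp [z1]

lemma z0_one : z0 p a 1 = 1 := by simp [z0]

lemma z1_split {y m : ℕ} (h1 : 1 ≤ y) (h2 : y ≤ m) :
    z1 p a m = z1 p a y * ∏ i ∈ Finset.Ico y m, p (a i) :=
  (Finset.prod_Ico_consecutive _ h1 h2).symm

lemma z0_split {y m : ℕ} (h1 : 1 ≤ y) (h2 : y ≤ m) :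
    z0 p a m = z0 p a y * ∏ i ∈ Finset.Ico y m, (1 - p (a i)) :=
  (Finset.prod_Ico_consecutive _ h1 h2).symm

lemma erase_split {x k : ℕ} (hx : 1 ≤ x) (hk : x < k) :
    (Finset.Ico 1 k).erase x = Finset.Ico 1 x ∪ Finset.Ioo x k := by
  ext l
  simp only [Finset.mem_erase, Finset.mem_Ico, Finset.mem_union, Finset.mem_Ioo]
  omega

lemma erase_disj {x k : ℕ} : Disjoint (Finset.Ico 1 x) (Finset.Ioo x k) := by
  rw [Finset.disjoint_left]
  intro l hl hl'
  simp only [Finset.mem_Ico, Finset.mem_Ioo] at hl hl'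
  omega

/-- The swap of two positions in `[1,n]` maps `[1,n]` bijectively to itself. -/
lemma swap_bijOn {i j : ℕ} (hi : i ∈ Set.Icc 1 n) (hj : j ∈ Set.Icc 1 n) :
    Set.BijOn (Equiv.swap i j) (Set.Icc 1 n) (Set.Icc 1 n) := by
  have hmaps : Set.MapsTo (Equiv.swap i j) (Set.Icc 1 n) (Set.Icc 1 n) := by
    intro x hx
    rcases eq_or_ne x i with rfl | hxi
    · rw [Equiv.swap_apply_left]; exact hj
    rcases eq_or_ne x j with rfl | hxj
    · rw [Equiv.swap_apply_right]; exact hi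
    · rw [Equiv.swap_apply_of_ne_of_ne hxi hxj]; exact hx
  refine ⟨hmaps, (Equiv.injective _).injOn, ?_⟩
  intro y hy
  exact ⟨Equiv.swap i j y, hmaps hy, Equiv.swap_apply_self _ _ _⟩

lemma isOrdering_swap (hOrd : IsOrdering n a) {i j : ℕ}
    (hi : i ∈ Set.Icc 1 n) (hj : j ∈ Set.Icc 1 n) :
    IsOrdering n (a ∘ Equiv.swap i j) :=
  hOrd.comp (swap_bijOn hi hj)

end Basics
section Swap

variable {n : ℕ} {p : ℕ → ℝ} {a : ℕ → ℕ} {i j k : ℕ}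

lemma prod_swap_low (f : ℕ → ℝ) (hk : k ≤ i) (hij : i < j) :
    ∏ l ∈ Finset.Ico 1 k, f (a (Equiv.swap i j l)) = ∏ l ∈ Finset.Ico 1 k, f (a l) := by
  apply Finset.prod_congr rfl
  intro l hl
  simp only [Finset.mem_Ico] at hl
  rw [Equiv.swap_apply_of_ne_of_ne (by omega) (by omega)]

lemma prod_swap_high (f : ℕ → ℝ) (hi : i ∈ Finset.Ico 1 k) (hj : j ∈ Finset.Ico 1 k) :
    ∏ l ∈ Finset.Ico 1 k, f (a (Equiv.swap i j l)) = ∏ l ∈ Finset.Ico 1 k, f (a l) := by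
  refine Finset.prod_nbij' (Equiv.swap i j) (Equiv.swap i j) ?_ ?_ ?_ ?_ ?_
  · intro l hl
    rcases eq_or_ne l i with rfl | hxi
    · rwa [Equiv.swap_apply_left]
    rcases eq_or_ne l j with rfl | hxj
    · rwa [Equiv.swap_apply_right]
    · rwa [Equiv.swap_apply_of_ne_of_ne hxi hxj]
  · intro l hl
    rcases eq_or_ne l i with rfl | hxi
    · rwa [Equiv.swap_apply_left]
    rcases eq_or_ne l j with rfl | hxj
    · rwa [Equiv.swap_apply_right]
    · rwa [Equiv.swap_apply_of_ne_of_ne hxi hxj]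
  · intro l _; exact Equiv.swap_apply_self _ _ _
  · intro l _; exact Equiv.swap_apply_self _ _ _
  · intro l _; rfl

lemma prod_swap_mid (f : ℕ → ℝ) (h1 : 1 ≤ i) (hik : i < k) (hkj : k ≤ j) :
    ∏ l ∈ Finset.Ico 1 k, f (a (Equiv.swap i j l)) =
      f (a j) * ∏ l ∈ (Finset.Ico 1 k).erase i, f (a l) := by
  have hi : i ∈ Finset.Ico 1 k := by simp only [Finset.mem_Ico]; omega
  rw [← Finset.mul_prod_erase _ (fun l => f (a (Equiv.swap i j l))) hi,
    Equiv.swap_apply_left]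
  congr 1
  apply Finset.prod_congr rfl
  intro l hl
  simp only [Finset.mem_erase, Finset.mem_Ico] at hl
  rw [Equiv.swap_apply_of_ne_of_ne hl.1 (by omega)]

lemma cost_swap (hi1 : 1 ≤ i) (hij : i < j) (hjn : j ≤ n) :
    cost n p (a ∘ Equiv.swap i j) =
      cost n p a + (p (a j) - p (a i)) *
        ∑ k ∈ Finset.Ioc (max i 2) j,
          ((∏ l ∈ (Finset.Ico 1 k).erase i, p (a l)) -
           (∏ l ∈ (Finset.Ico 1 k).erase i, (1 - p (a l)))) := by
  have hdiff : ∀ k ∈ Finset.Icc 3 n,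
      z1 p (a ∘ Equiv.swap i j) k + z0 p (a ∘ Equiv.swap i j) k
        = (z1 p a k + z0 p a k) +
          (if k ∈ Finset.Ioc (max i 2) j then
            (p (a j) - p (a i)) *
              ((∏ l ∈ (Finset.Ico 1 k).erase i, p (a l)) -
               (∏ l ∈ (Finset.Ico 1 k).erase i, (1 - p (a l)))) else 0) := by
    intro k hk
    simp only [Finset.mem_Icc] at hk
    have hcond : k ∈ Finset.Ioc (max i 2) j ↔ (i < k ∧ k ≤ j) := by
      simp only [Finset.mem_Ioc]; omega
    show (∏ l ∈ Finset.Ico 1 k, p (a (Equiv.swap i j l)))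
        + (∏ l ∈ Finset.Ico 1 k, (1 - p (a (Equiv.swap i j l)))) = _
    by_cases hklei : k ≤ i
    · rw [prod_swap_low p hklei hij, prod_swap_low (fun t => 1 - p t) hklei hij,
        if_neg (by rw [hcond]; omega)]
      simp [z1, z0]
    by_cases hkgtj : j < k
    · rw [prod_swap_high p (by simp only [Finset.mem_Ico]; omega)
          (by simp only [Finset.mem_Ico]; omega),
        prod_swap_high (fun t => 1 - p t) (by simp only [Finset.mem_Ico]; omega)
          (by simp only [Finset.mem_Ico]; omega),
        if_neg (by rw [hcond]; omega)]
      simp [z1, z0]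
    · have hik : i < k := by omega
      have hkj : k ≤ j := by omega
      have hi : i ∈ Finset.Ico 1 k := by simp only [Finset.mem_Ico]; omega
      rw [prod_swap_mid p hi1 hik hkj, prod_swap_mid (fun t => 1 - p t) hi1 hik hkj,
        if_pos (hcond.mpr ⟨hik, hkj⟩)]
      have e1 : z1 p a k = p (a i) * ∏ l ∈ (Finset.Ico 1 k).erase i, p (a l) :=
        (Finset.mul_prod_erase _ _ hi).symm
      have e0 : z0 p a k = (1 - p (a i)) * ∏ l ∈ (Finset.Ico 1 k).erase i, (1 - p (a l)) :=
        (Finset.mul_prod_erase _ _ hi).symm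
      rw [e1, e0]
      ring
  have hsub : Finset.Ioc (max i 2) j ⊆ Finset.Icc 3 n := by
    intro k hk
    simp only [Finset.mem_Ioc] at hk
    simp only [Finset.mem_Icc]
    omega
  unfold cost
  rw [Finset.sum_congr rfl hdiff, Finset.sum_add_distrib, Finset.sum_ite_mem,
    Finset.inter_eq_right.mpr hsub, Finset.mul_sum]
  ring

end Swap
section OptIneq

variable {n : ℕ} {p : ℕ → ℝ} {a : ℕ → ℕ} {i j : ℕ}

lemma opt_swap_ineq (hOpt : IsOptimal n p a) (hi1 : 1 ≤ i) (hij : i < j) (hjn : j ≤ n) :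
    0 ≤ (p (a j) - p (a i)) *
        ∑ k ∈ Finset.Ioc (max i 2) j,
          ((∏ l ∈ (Finset.Ico 1 k).erase i, p (a l)) -
           (∏ l ∈ (Finset.Ico 1 k).erase i, (1 - p (a l)))) := by
  have hb : IsOrdering n (a ∘ Equiv.swap i j) :=
    isOrdering_swap hOpt.1 ⟨hi1, by omega⟩ ⟨by omega, hjn⟩
  have := hOpt.2 _ hb
  rw [cost_swap hi1 hij hjn] at this
  linarith

lemma opt_adjacent (hOpt : IsOptimal n p a) (hi2 : 2 ≤ i) (hin : i + 1 ≤ n) :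
    0 ≤ (p (a (i + 1)) - p (a i)) * (z1 p a i - z0 p a i) := by
  have h := opt_swap_ineq hOpt (by omega) (Nat.lt_succ_self i) hin
  have hmax : max i 2 = i := by omega
  have hsingle : Finset.Ioc (max i 2) (i + 1) = {i + 1} := by
    rw [hmax]
    ext l; simp only [Finset.mem_Ioc, Finset.mem_singleton]; omega
  have hset : (Finset.Ico 1 (i + 1)).erase i = Finset.Ico 1 i := by
    ext l; simp only [Finset.mem_erase, Finset.mem_Ico]; omega
  rw [hsingle, Finset.sum_singleton, hset] at h
  exact h

/-- In an optimal ordering, a 1-biased position holding a coin of weight `≥ 1/2`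
always lies in the final block; contrapositive form. -/
lemma not_oneBiased (hOpt : IsOptimal n p a)
    (hp : ∀ i, 1 ≤ i → i ≤ n → 0 ≤ p i ∧ p i ≤ 1)
    {k : ℕ} (hk1 : 1 ≤ k) (hkn : k ≤ n) (hNF : ¬ InFinalBlock n p a k)
    (hq : 1 / 2 ≤ p (a k)) : z1 p a k ≤ z0 p a k := by
  by_contra hcon
  push_neg at hcon   -- z0 k < z1 k
  rcases Nat.eq_or_lt_of_le hk1 with h1 | hk2
  · rw [← h1, z1_one, z0_one] at hcon; linarith
  -- k ≥ 2
  have key : ∀ m, k ≤ m → m ≤ n → z0 p a m < z1 p a m ∧ (m < n → 1 / 2 ≤ p (a m)) := by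
    intro m hkm
    induction m, hkm using Nat.le_induction with
    | base => exact fun _ => ⟨hcon, fun _ => hq⟩
    | succ m hm ih =>
      intro hm1n
      obtain ⟨hbias, hhalf⟩ := ih (by omega)
      have hq2 := hhalf (by omega)
      have hpm := hpmem hOpt.1 hp (show 1 ≤ m by omega) (by omega)
      have hz1 : z1 p a (m + 1) = z1 p a m * p (a m) := z1_succ (by omega)
      have hz0 : z0 p a (m + 1) = z0 p a m * (1 - p (a m)) := z0_succ (by omega)
      have hz0m : 0 ≤ z0 p a m := z0_nonneg hOpt.1 hp (by omega)
      have hbias' : z0 p a (m + 1) < z1 p a (m + 1) := by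
        rw [hz1, hz0]
        have h1 : z0 p a m * (1 - p (a m)) ≤ z0 p a m * p (a m) := by nlinarith
        have h2 : z0 p a m * p (a m) < z1 p a m * p (a m) := by nlinarith
        linarith
      refine ⟨hbias', fun hmn => ?_⟩
      have hadj := opt_adjacent (i := m) hOpt (by omega) (by omega)
      nlinarith
  apply hNF
  refine ⟨hk1, hkn, fun y hy1 hy2 => ?_⟩
  have h1 := (key y hy1 hy2).1
  have h2 := (key n (by omega) le_rfl).1
  rw [btype, btype, compare_lt_iff_lt.mpr h1, compare_lt_iff_lt.mpr h2]

end OptIneq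
section Mirror

variable {n : ℕ} {p : ℕ → ℝ} {a : ℕ → ℕ}

lemma compare_comm_swap (a b : ℝ) : compare b a = (compare a b).swap := by
  rcases lt_trichotomy a b with h1 | h1 | h1
  · rw [compare_lt_iff_lt.mpr h1, compare_gt_iff_gt.mpr h1]; rfl
  · rw [compare_eq_iff_eq.mpr h1, compare_eq_iff_eq.mpr h1.symm]; rfl
  · rw [compare_gt_iff_gt.mpr h1, compare_lt_iff_lt.mpr h1]; rfl

lemma compare_comm_iff {a b c d : ℝ} :
    compare b a = compare d c ↔ compare a b = compare c d := by
  rw [compare_comm_swap a b, compare_comm_swap c d]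
  constructor
  · intro h
    have := congrArg Ordering.swap h
    simpa using this
  · intro h; rw [h]

lemma z1_mirror (j : ℕ) : z1 (fun t => 1 - p t) a j = z0 p a j := rfl

lemma z0_mirror (j : ℕ) : z0 (fun t => 1 - p t) a j = z1 p a j := by
  unfold z0 z1
  apply Finset.prod_congr rfl
  intro l _
  ring

lemma cost_mirror : cost n (fun t => 1 - p t) a = cost n p a := by
  unfold cost
  congr 1
  apply Finset.sum_congr rfl
  intro j _
  rw [z1_mirror, z0_mirror]
  ring

lemma isOptimal_mirror (h : IsOptimal n p a) : IsOptimal n (fun t => 1 - p t) a := by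
  refine ⟨h.1, fun b hb => ?_⟩
  rw [cost_mirror, cost_mirror]
  exact h.2 b hb

lemma btype_mirror_eq {x y : ℕ} :
    btype (fun t => 1 - p t) a x = btype (fun t => 1 - p t) a y ↔ btype p a x = btype p a y := by
  unfold btype
  rw [z1_mirror, z0_mirror, z1_mirror, z0_mirror]
  exact compare_comm_iff

lemma inFinalBlock_mirror {x : ℕ} :
    InFinalBlock n (fun t => 1 - p t) a x ↔ InFinalBlock n p a x := by
  unfold InFinalBlock
  constructor <;> rintro ⟨h1, h2, h3⟩ <;> refine ⟨h1, h2, fun y hy1 hy2 => ?_⟩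
  · exact btype_mirror_eq.mp (h3 y hy1 hy2)
  · exact btype_mirror_eq.mpr (h3 y hy1 hy2)

lemma hp_mirror (hp : ∀ i, 1 ≤ i → i ≤ n → 0 ≤ p i ∧ p i ≤ 1) :
    ∀ i, 1 ≤ i → i ≤ n → 0 ≤ (fun t => 1 - p t) i ∧ (fun t => 1 - p t) i ≤ 1 := by
  intro i h1 h2
  obtain ⟨ha, hb⟩ := hp i h1 h2
  constructor <;> simp <;> linarith

/-- Mirror of `not_oneBiased`. -/
lemma not_zeroBiased (hOpt : IsOptimal n p a)
    (hp : ∀ i, 1 ≤ i → i ≤ n → 0 ≤ p i ∧ p i ≤ 1)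
    {k : ℕ} (hk1 : 1 ≤ k) (hkn : k ≤ n) (hNF : ¬ InFinalBlock n p a k)
    (hq : p (a k) ≤ 1 / 2) : z0 p a k ≤ z1 p a k := by
  have := not_oneBiased (isOptimal_mirror hOpt) (hp_mirror hp) hk1 hkn
    (fun h => hNF (inFinalBlock_mirror.mp h)) (by simpa using by linarith : (1:ℝ)/2 ≤ 1 - p (a k))
  rwa [z1_mirror, z0_mirror] at this

end Mirror
section Blocks

variable {n : ℕ} {p : ℕ → ℝ} {a : ℕ → ℕ}

lemma final_mono {x y : ℕ} (hxy : x ≤ y) (hyn : y ≤ n)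
    (hF : InFinalBlock n p a x) : InFinalBlock n p a y := by
  obtain ⟨h1, _, h3⟩ := hF
  exact ⟨by omega, hyn, fun w hw1 hw2 => h3 w (by omega) hw2⟩

lemma zero_final {y : ℕ} (hy1 : 1 ≤ y) (hyn : y ≤ n)
    (h1 : z1 p a y = 0) (h0 : z0 p a y = 0) : InFinalBlock n p a y := by
  have hz : ∀ m, y ≤ m → z1 p a m = 0 ∧ z0 p a m = 0 := by
    intro m hm
    rw [z1_split hy1 hm, z0_split hy1 hm, h1, h0]
    simp
  refine ⟨hy1, hyn, fun m hm1 hm2 => ?_⟩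
  obtain ⟨e1, e0⟩ := hz m hm1
  obtain ⟨f1, f0⟩ := hz n (by omega)
  rw [btype, btype, e1, e0, f1, f0]

end Blocks

section NoViol

variable {n : ℕ} {p : ℕ → ℝ} {a : ℕ → ℕ}

lemma no_viol_hi (hOpt : IsOptimal n p a)
    (hp : ∀ i, 1 ≤ i → i ≤ n → 0 ≤ p i ∧ p i ≤ 1) :
    ∀ d x y, y - x ≤ d → 1 ≤ x → x < y → y ≤ n →
      ¬ InFinalBlock n p a x → ¬ InFinalBlock n p a y →
      1 / 2 < p (a x) → 1 / 2 < p (a y) → p (a y) ≤ p (a x) := by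
  intro d
  induction d with
  | zero => intro x y h hx hxy; omega
  | succ d IH =>
    intro x y hd hx1 hxy hyn hNFx hNFy hqx hqy
    by_contra hcon
    push_neg at hcon
    have hmid : ∀ z, x < z → z < y → p (a z) ≤ 1 / 2 := by
      intro z hz1 hz2
      by_contra hzc
      push_neg at hzc
      have hNFz : ¬ InFinalBlock n p a z := fun hF => hNFy (final_mono (by omega) hyn hF)
      have h1 := IH x z (by omega) hx1 hz1 (by omega) hNFx hNFz hqx hzc
      have h2 := IH z y (by omega) (by omega) hz2 hyn hNFz hNFy hzc hqy
      linarith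
    have hx_bias : z1 p a x ≤ z0 p a x :=
      not_oneBiased hOpt hp hx1 (by omega) hNFx hqx.le
    by_cases hy3 : 3 ≤ y
    · -- main case
      set S := ∑ k ∈ Finset.Ioc (max x 2) y,
          ((∏ l ∈ (Finset.Ico 1 k).erase x, p (a l)) -
           (∏ l ∈ (Finset.Ico 1 k).erase x, (1 - p (a l)))) with hSdef
      have hW := opt_swap_ineq hOpt (i := x) (j := y) hx1 hxy hyn
      rw [← hSdef] at hW
      have hterm : ∀ k ∈ Finset.Ioc (max x 2) y,
          (∏ l ∈ (Finset.Ico 1 k).erase x, p (a l)) -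
            (∏ l ∈ (Finset.Ico 1 k).erase x, (1 - p (a l))) ≤ 0 := by
        intro k hk
        simp only [Finset.mem_Ioc, max_lt_iff] at hk
        obtain ⟨⟨hxk, _⟩, hky⟩ := hk
        rw [erase_split hx1 hxk, Finset.prod_union erase_disj, Finset.prod_union erase_disj]
        have hz1x : (∏ l ∈ Finset.Ico 1 x, p (a l)) = z1 p a x := rfl
        have hz0x : (∏ l ∈ Finset.Ico 1 x, (1 - p (a l))) = z0 p a x := rfl
        rw [hz1x, hz0x]
        have hα : 0 ≤ ∏ l ∈ Finset.Ioo x k, p (a l) := by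
          apply Finset.prod_nonneg
          intro l hl
          simp only [Finset.mem_Ioo] at hl
          exact (hpmem hOpt.1 hp (by omega) (by omega)).1
        have hαβ : (∏ l ∈ Finset.Ioo x k, p (a l)) ≤ ∏ l ∈ Finset.Ioo x k, (1 - p (a l)) := by
          apply Finset.prod_le_prod
          · intro l hl
            simp only [Finset.mem_Ioo] at hl
            exact (hpmem hOpt.1 hp (by omega) (by omega)).1
          · intro l hl
            simp only [Finset.mem_Ioo] at hl
            have := hmid l hl.1 (by omega)
            linarith
        have hz0nn : 0 ≤ z0 p a x := z0_nonneg hOpt.1 hp (by omega)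
        nlinarith
      have hWnonneg : 0 ≤ S := by
        rcases le_or_gt 0 S with h | h
        · exact h
        · nlinarith
      have hWzero : S = 0 := le_antisymm (Finset.sum_nonpos hterm) hWnonneg
      have hally := (Finset.sum_eq_zero_iff_of_nonpos hterm).mp hWzero y
        (by simp only [Finset.mem_Ioc, max_lt_iff]; omega)
      have hxmem : x ∈ Finset.Ico 1 y := by simp only [Finset.mem_Ico]; omega
      have hW0nn : 0 ≤ ∏ l ∈ (Finset.Ico 1 y).erase x, p (a l) := by
        apply Finset.prod_nonneg
        intro l hl
        simp only [Finset.mem_erase, Finset.mem_Ico] at hl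
        exact (hpmem hOpt.1 hp (by omega) (by omega)).1
      have e1 : z1 p a y = p (a x) * ∏ l ∈ (Finset.Ico 1 y).erase x, p (a l) :=
        (Finset.mul_prod_erase _ _ hxmem).symm
      have e0 : z0 p a y = (1 - p (a x)) * ∏ l ∈ (Finset.Ico 1 y).erase x, (1 - p (a l)) :=
        (Finset.mul_prod_erase _ _ hxmem).symm
      have e0' : z0 p a y = (1 - p (a x)) * ∏ l ∈ (Finset.Ico 1 y).erase x, p (a l) := by
        rw [e0]; congr 1; linarith
      rcases eq_or_lt_of_le hW0nn with hW0 | hW0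
      · exact hNFy (zero_final (by omega) hyn (by rw [e1, ← hW0]; ring)
          (by rw [e0', ← hW0]; ring))
      · have hbias : z0 p a y < z1 p a y := by
          rw [e1, e0']
          nlinarith
        have := not_oneBiased hOpt hp (by omega) hyn hNFy hqy.le
        linarith
    · -- y = 2, x = 1
      have hy2 : y = 2 := by omega
      have hx1' : x = 1 := by omega
      have hz1 : z1 p a 2 = p (a 1) := by
        unfold z1
        rw [show Finset.Ico 1 2 = {1} from rfl, Finset.prod_singleton]
      have hz0 : z0 p a 2 = 1 - p (a 1) := by
        unfold z0
        rw [show Finset.Ico 1 2 = {1} from rfl, Finset.prod_singleton]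
      have := not_oneBiased hOpt hp (by omega) hyn (hy2 ▸ hNFy) hqy.le
      rw [hy2, hz1, hz0] at this
      rw [hx1'] at hqx
      linarith

lemma no_viol_lo (hOpt : IsOptimal n p a)
    (hp : ∀ i, 1 ≤ i → i ≤ n → 0 ≤ p i ∧ p i ≤ 1) :
    ∀ x y, 1 ≤ x → x < y → y ≤ n →
      ¬ InFinalBlock n p a x → ¬ InFinalBlock n p a y →
      p (a x) < 1 / 2 → p (a y) < 1 / 2 → p (a x) ≤ p (a y) := by
  intro x y hx1 hxy hyn hNFx hNFy hqx hqy
  have := no_viol_hi (isOptimal_mirror hOpt) (hp_mirror hp) (y - x) x y le_rfl hx1 hxy hyn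
    (fun h => hNFx (inFinalBlock_mirror.mp h)) (fun h => hNFy (inFinalBlock_mirror.mp h))
    (show (1:ℝ)/2 < 1 - p (a x) by linarith) (show (1:ℝ)/2 < 1 - p (a y) by linarith)
  have h2 : 1 - p (a y) ≤ 1 - p (a x) := this
  linarith

end NoViol
section Selection

variable {n : ℕ} {p : ℕ → ℝ}

/-- Tie-breaking potential: `Σ i·|p (c i) - 1/2|`. -/
noncomputable def Phi (n : ℕ) (p : ℕ → ℝ) (c : ℕ → ℕ) : ℝ :=
  ∑ i ∈ Finset.Icc 1 n, (i : ℝ) * |p (c i) - 1 / 2|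

def toOrd (n : ℕ) (σ : Equiv.Perm (Fin n)) (k : ℕ) : ℕ :=
  if h : k - 1 < n ∧ 1 ≤ k then ((σ ⟨k - 1, h.1⟩ : Fin n) : ℕ) + 1 else k

lemma toOrd_isOrdering (hn : 1 ≤ n) (σ : Equiv.Perm (Fin n)) : IsOrdering n (toOrd n σ) := by
  refine ⟨?_, ?_, ?_⟩
  · intro k hk
    obtain ⟨hk1, hk2⟩ := hk
    have h : k - 1 < n ∧ 1 ≤ k := ⟨by omega, hk1⟩
    simp only [toOrd, dif_pos h]
    exact ⟨by omega, by have := (σ ⟨k - 1, h.1⟩).isLt; omega⟩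
  · intro k hk k' hk' heq
    obtain ⟨hk1, hk2⟩ := hk
    obtain ⟨hk1', hk2'⟩ := hk'
    have h : k - 1 < n ∧ 1 ≤ k := ⟨by omega, hk1⟩
    have h' : k' - 1 < n ∧ 1 ≤ k' := ⟨by omega, hk1'⟩
    simp only [toOrd, dif_pos h, dif_pos h'] at heq
    have : σ ⟨k - 1, h.1⟩ = σ ⟨k' - 1, h'.1⟩ := Fin.ext (by omega)
    have := σ.injective this
    have : k - 1 = k' - 1 := congrArg Fin.val this
    omega
  · intro m hm
    obtain ⟨hm1, hm2⟩ := hm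
    set x := σ.symm ⟨m - 1, by omega⟩ with hx
    refine ⟨x.val + 1, ⟨by omega, by have := x.isLt; omega⟩, ?_⟩
    have h : x.val + 1 - 1 < n ∧ 1 ≤ x.val + 1 := ⟨by simpa using x.isLt, by omega⟩
    simp only [toOrd, dif_pos h]
    have hfx : (⟨x.val + 1 - 1, h.1⟩ : Fin n) = x := Fin.ext (by simp)
    rw [hfx, hx, Equiv.apply_symm_apply]
    simp only [Fin.val_mk]
    omega

lemma cost_congr {b c : ℕ → ℕ} (h : ∀ k, 1 ≤ k → k ≤ n → b k = c k) :
    cost n p b = cost n p c := by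
  unfold cost
  congr 1
  apply Finset.sum_congr rfl
  intro j hj
  simp only [Finset.mem_Icc] at hj
  unfold z1 z0
  congr 1 <;>
  · apply Finset.prod_congr rfl
    intro i hi
    simp only [Finset.mem_Ico] at hi
    rw [h i hi.1 (by omega)]

lemma Phi_congr {b c : ℕ → ℕ} (h : ∀ k, 1 ≤ k → k ≤ n → b k = c k) :
    Phi n p b = Phi n p c := by
  unfold Phi
  apply Finset.sum_congr rfl
  intro i hi
  simp only [Finset.mem_Icc] at hi
  rw [h i hi.1 hi.2]

lemma exists_perm {b : ℕ → ℕ} (hb : IsOrdering n b) :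
    ∃ σ : Equiv.Perm (Fin n), ∀ k, 1 ≤ k → k ≤ n → toOrd n σ k = b k := by
  have hbm : ∀ x : Fin n, 1 ≤ b (x.val + 1) ∧ b (x.val + 1) ≤ n := by
    intro x
    have := hb.mapsTo (show x.val + 1 ∈ Set.Icc 1 n from ⟨by omega, by have := x.isLt; omega⟩)
    exact this
  set g : Fin n → Fin n := fun x => ⟨b (x.val + 1) - 1, by have := hbm x; omega⟩ with hg
  have ginj : Function.Injective g := by
    intro x y hxy
    have h1 := hbm x
    have h2 := hbm y
    have : b (x.val + 1) - 1 = b (y.val + 1) - 1 := congrArg Fin.val hxy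
    have heq : b (x.val + 1) = b (y.val + 1) := by omega
    have := hb.injOn (show x.val + 1 ∈ Set.Icc 1 n from ⟨by omega, by have := x.isLt; omega⟩)
      (show y.val + 1 ∈ Set.Icc 1 n from ⟨by omega, by have := y.isLt; omega⟩) heq
    exact Fin.ext (by omega)
  refine ⟨Equiv.ofBijective g (Finite.injective_iff_bijective.mp ginj), ?_⟩
  intro k hk1 hk2
  have h : k - 1 < n ∧ 1 ≤ k := ⟨by omega, hk1⟩
  simp only [toOrd, dif_pos h, Equiv.ofBijective_apply, hg]
  have h3 := hbm ⟨k - 1, h.1⟩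
  simp only at h3 ⊢
  have : k - 1 + 1 = k := by omega
  rw [this] at h3 ⊢
  omega

lemma exists_good_optimal (hn : 1 ≤ n) :
    ∃ a : ℕ → ℕ, IsOptimal n p a ∧
      ∀ b : ℕ → ℕ, IsOrdering n b → cost n p b = cost n p a → Phi n p a ≤ Phi n p b := by
  classical
  obtain ⟨σC, _, hσC⟩ := Finset.exists_min_image Finset.univ
    (fun σ : Equiv.Perm (Fin n) => cost n p (toOrd n σ)) ⟨1, Finset.mem_univ 1⟩
  set U : Finset (Equiv.Perm (Fin n)) :=
    Finset.univ.filter (fun σ => cost n p (toOrd n σ) = cost n p (toOrd n σC)) with hU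
  have hUne : U.Nonempty := ⟨σC, by simp [hU]⟩
  obtain ⟨σ0, hσ0U, hσ0⟩ := Finset.exists_min_image U (fun σ => Phi n p (toOrd n σ)) hUne
  have hσ0cost : cost n p (toOrd n σ0) = cost n p (toOrd n σC) := by
    have := hσ0U
    simp only [hU, Finset.mem_filter] at this
    exact this.2
  refine ⟨toOrd n σ0, ⟨toOrd_isOrdering hn σ0, ?_⟩, ?_⟩
  · intro b hb
    obtain ⟨σb, hσb⟩ := exists_perm hb
    have h1 : cost n p (toOrd n σb) = cost n p b := cost_congr hσb
    rw [hσ0cost, ← h1]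
    exact hσC σb (Finset.mem_univ σb)
  · intro b hb hcost
    obtain ⟨σb, hσb⟩ := exists_perm hb
    have h1 : cost n p (toOrd n σb) = cost n p b := cost_congr hσb
    have h2 : Phi n p (toOrd n σb) = Phi n p b := Phi_congr hσb
    have hmem : σb ∈ U := by
      simp only [hU, Finset.mem_filter]
      exact ⟨Finset.mem_univ σb, by rw [h1, hcost, hσ0cost]⟩
    rw [← h2]
    exact hσ0 σb hmem

end Selection
section NoHalf

variable {n : ℕ} {p : ℕ → ℝ} {a : ℕ → ℕ}

lemma swap_mem_Icc {k j i : ℕ} (hk : k ∈ Finset.Icc 1 n) (hj : j ∈ Finset.Icc 1 n)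
    (hi : i ∈ Finset.Icc 1 n) : Equiv.swap k j i ∈ Finset.Icc 1 n := by
  rcases eq_or_ne i k with rfl | h1
  · rwa [Equiv.swap_apply_left]
  rcases eq_or_ne i j with rfl | h2
  · rwa [Equiv.swap_apply_right]
  · rwa [Equiv.swap_apply_of_ne_of_ne h1 h2]

lemma no_half (hOpt : IsOptimal n p a)
    (hPhi : ∀ b : ℕ → ℕ, IsOrdering n b → cost n p b = cost n p a → Phi n p a ≤ Phi n p b)
    (hp : ∀ i, 1 ≤ i → i ≤ n → 0 ≤ p i ∧ p i ≤ 1)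
    {k : ℕ} (hk1 : 1 ≤ k) (hkn : k ≤ n) (hNF : ¬ InFinalBlock n p a k) :
    p (a k) ≠ 1 / 2 := by
  classical
  by_contra heq
  have hub1 : z1 p a k ≤ z0 p a k := not_oneBiased hOpt hp hk1 hkn hNF (le_of_eq heq.symm)
  have hub2 : z0 p a k ≤ z1 p a k := not_zeroBiased hOpt hp hk1 hkn hNF (le_of_eq heq)
  have hub : z1 p a k = z0 p a k := le_antisymm hub1 hub2
  set Sf : Finset ℕ := (Finset.Ioc k (n - 1)).filter (fun l => p (a l) ≠ 1 / 2) with hSf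
  by_cases hSfne : Sf.Nonempty
  · -- there is a later non-1/2 coin; swap with the first one, for free
    set j := Sf.min' hSfne with hj
    have hjmem : j ∈ Sf := Sf.min'_mem hSfne
    rw [hSf, Finset.mem_filter, Finset.mem_Ioc] at hjmem
    obtain ⟨⟨hkj, hjn⟩, hjhalf⟩ := hjmem
    have hmid : ∀ l, k < l → l < j → p (a l) = 1 / 2 := by
      intro l hl1 hl2
      by_contra hlc
      have : l ∈ Sf := by
        rw [hSf, Finset.mem_filter, Finset.mem_Ioc]
        exact ⟨⟨hl1, by omega⟩, hlc⟩
      have := Sf.min'_le l this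
      omega
    -- the swap is free
    have hcost : cost n p (a ∘ Equiv.swap k j) = cost n p a := by
      rw [cost_swap hk1 hkj (by omega)]
      have hterm : ∀ m ∈ Finset.Ioc (max k 2) j,
          (∏ l ∈ (Finset.Ico 1 m).erase k, p (a l)) -
            (∏ l ∈ (Finset.Ico 1 m).erase k, (1 - p (a l))) = 0 := by
        intro m hm
        simp only [Finset.mem_Ioc, max_lt_iff] at hm
        obtain ⟨⟨hkm, _⟩, hmj⟩ := hm
        rw [erase_split hk1 hkm, Finset.prod_union erase_disj, Finset.prod_union erase_disj]
        have hz1x : (∏ l ∈ Finset.Ico 1 k, p (a l)) = z1 p a k := rfl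
        have hz0x : (∏ l ∈ Finset.Ico 1 k, (1 - p (a l))) = z0 p a k := rfl
        have hα : (∏ l ∈ Finset.Ioo k m, p (a l)) = ∏ l ∈ Finset.Ioo k m, ((1:ℝ)/2) := by
          apply Finset.prod_congr rfl
          intro l hl
          simp only [Finset.mem_Ioo] at hl
          exact hmid l hl.1 (by omega)
        have hβ : (∏ l ∈ Finset.Ioo k m, (1 - p (a l))) = ∏ l ∈ Finset.Ioo k m, ((1:ℝ)/2) := by
          apply Finset.prod_congr rfl
          intro l hl
          simp only [Finset.mem_Ioo] at hl
          rw [hmid l hl.1 (by omega)]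
          norm_num
        rw [hz1x, hz0x, hα, hβ, hub]
        ring
      rw [Finset.sum_eq_zero hterm]
      ring
    set b := a ∘ Equiv.swap k j with hb
    have hbord : IsOrdering n b := isOrdering_swap hOpt.1 ⟨hk1, hkn⟩ ⟨by omega, by omega⟩
    have hPhile := hPhi b hbord hcost
    -- but the swap strictly decreases Phi
    have hkIcc : k ∈ Finset.Icc 1 n := by simp only [Finset.mem_Icc]; omega
    have hjIcc : j ∈ Finset.Icc 1 n := by simp only [Finset.mem_Icc]; omega
    have hreindex : Phi n p b =
        ∑ i ∈ Finset.Icc 1 n, ((Equiv.swap k j i : ℕ) : ℝ) * |p (a i) - 1 / 2| := by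
      unfold Phi
      refine Finset.sum_nbij' (Equiv.swap k j) (Equiv.swap k j)
        (fun i hi => swap_mem_Icc hkIcc hjIcc hi)
        (fun i hi => swap_mem_Icc hkIcc hjIcc hi)
        (fun i _ => Equiv.swap_apply_self _ _ _)
        (fun i _ => Equiv.swap_apply_self _ _ _) ?_
      intro i _
      rw [hb]
      simp only [Function.comp_apply, Equiv.swap_apply_self]
    have hdiff : Phi n p b - Phi n p a =
        ∑ i ∈ Finset.Icc 1 n, (((Equiv.swap k j i : ℕ) : ℝ) - i) * |p (a i) - 1 / 2| := by
      rw [hreindex]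
      unfold Phi
      rw [← Finset.sum_sub_distrib]
      apply Finset.sum_congr rfl
      intro i _
      ring
    have hsupp : ∀ i ∈ Finset.Icc 1 n, i ∉ ({k, j} : Finset ℕ) →
        (((Equiv.swap k j i : ℕ) : ℝ) - i) * |p (a i) - 1 / 2| = 0 := by
      intro i _ hi
      simp only [Finset.mem_insert, Finset.mem_singleton] at hi
      push_neg at hi
      rw [Equiv.swap_apply_of_ne_of_ne hi.1 hi.2]
      ring
    have hpair : ({k, j} : Finset ℕ) ⊆ Finset.Icc 1 n := by
      intro i hi
      simp only [Finset.mem_insert, Finset.mem_singleton] at hi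
      rcases hi with rfl | rfl
      exacts [hkIcc, hjIcc]
    have hsum2 : Phi n p b - Phi n p a =
        (((Equiv.swap k j k : ℕ) : ℝ) - k) * |p (a k) - 1 / 2| +
        (((Equiv.swap k j j : ℕ) : ℝ) - j) * |p (a j) - 1 / 2| := by
      rw [hdiff, ← Finset.sum_subset hpair hsupp,
        Finset.sum_pair (show k ≠ j by omega)]
    rw [Equiv.swap_apply_left, Equiv.swap_apply_right, heq] at hsum2
    simp only [sub_self, abs_zero, mul_zero, zero_add] at hsum2
    have habs : 0 < |p (a j) - 1 / 2| := abs_pos.mpr (sub_ne_zero.mpr hjhalf)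
    have hlt : ((k : ℝ) - j) < 0 := by
      have : (k : ℝ) < j := by exact_mod_cast hkj
      linarith
    nlinarith [hPhile, hsum2, mul_neg_of_neg_of_pos hlt habs]
  · -- no later non-1/2 coin: k is in the final block, contradiction
    rw [Finset.not_nonempty_iff_eq_empty] at hSfne
    have hall : ∀ l, k < l → l ≤ n - 1 → p (a l) = 1 / 2 := by
      intro l h1 h2
      by_contra hlc
      have : l ∈ Sf := by
        rw [hSf, Finset.mem_filter, Finset.mem_Ioc]
        exact ⟨⟨h1, h2⟩, hlc⟩
      rw [hSfne] at this
      exact absurd this (Finset.notMem_empty l)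
    have hkey : ∀ m, k ≤ m → m ≤ n → z1 p a m = z0 p a m := by
      intro m hkm
      induction m, hkm using Nat.le_induction with
      | base => exact fun _ => hub
      | succ m hm ih =>
        intro hm1
        have hih := ih (by omega)
        have hqm : p (a m) = 1 / 2 := by
          rcases Nat.eq_or_lt_of_le hm with h | h
          · rw [← h]; exact heq
          · exact hall m h (by omega)
        rw [z1_succ (by omega), z0_succ (by omega), hih, hqm]
        norm_num
    apply hNF
    refine ⟨hk1, hkn, fun m hm1 hm2 => ?_⟩
    rw [btype, btype, compare_eq_iff_eq.mpr (hkey m hm1 hm2).symm,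
      compare_eq_iff_eq.mpr (hkey n (by omega) le_rfl).symm]

end NoHalf

/-- There is an optimal ordering in which every coin in a non-final block has
heads-probability different from 1/2, the coins in non-final blocks with
heads-probability above 1/2 appear in non-increasing order, and those with
heads-probability below 1/2 appear in non-decreasing order. -/
theorem exists_optimal_sorted_across_blocks (n : ℕ) (hn : 2 ≤ n) (p : ℕ → ℝ)
    (hp : ∀ i, 1 ≤ i → i ≤ n → 0 ≤ p i ∧ p i ≤ 1) :
    ∃ a : ℕ → ℕ, IsOptimal n p a ∧
      (∀ x, 1 ≤ x → x ≤ n → ¬ InFinalBlock n p a x → p (a x) ≠ 1 / 2) ∧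
      (∀ x y, 1 ≤ x → x < y → y ≤ n →
        ¬ InFinalBlock n p a x → ¬ InFinalBlock n p a y →
        (1 / 2 < p (a x) → 1 / 2 < p (a y) → p (a y) ≤ p (a x)) ∧
        (p (a x) < 1 / 2 → p (a y) < 1 / 2 → p (a x) ≤ p (a y))) := by
  obtain ⟨a, hOpt, hPhi⟩ := exists_good_optimal (p := p) (show 1 ≤ n by omega)
  refine ⟨a, hOpt, ?_, ?_⟩
  · intro x hx1 hxn hNF
    exact no_half hOpt hPhi hp hx1 hxn hNF
  · intro x y hx1 hxy hyn hNFx hNFy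
    constructor
    · intro h1 h2
      exact no_viol_hi hOpt hp (y - x) x y le_rfl hx1 hxy hyn hNFx hNFy h1 h2
    · intro h1 h2
      exact no_viol_lo hOpt hp x y hx1 hxy hyn hNFx hNFy h1 h2
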